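/- arXiv:math/0703192 — 4 statements merged into one kernel-verified Lean document; each statement's English description precedes it below -/
import Mathlib

section
/- Let A be a connected abelian Lie group, realized as A = Ã/Γ with Ã a finite-dimensional real vector space and Γ a discrete subgroup (a lattice in its real span). Let F̃ be a subgroup of Ã such that F̃ + Γ is discrete and F̃ ∩ Γ = {0}. Then F̃ ∩ span_ℝ(Γ) = {0}; hence F̃ is contained in a linear complement of span_ℝ(Γ) in Ã. -/
/-!
A discrete subgroup `L` of a finite-dimensional real space is a lattice in its real span, so its
`ℤ`-rank equals `dim_ℝ (span_ℝ L)`. Applied to `F`, `Γ` and the discrete group `F + Γ`, and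
using `F ∩ Γ = 0` to add the `ℤ`-ranks, this gives
`dim (span F + span Γ) = dim (span F) + dim (span Γ)`, so the two real spans meet only in `0`.
A complement of `span Γ` containing `span F` then exists in any vector space.
-/

open Module Submodule

theorem Submodule.finrank_sup_of_disjoint {R M : Type*} [CommRing R] [IsDomain R]
    [AddCommGroup M] [Module R M] {s t : Submodule R M} [Module.Finite R s] [Module.Finite R t]
    (h : Disjoint s t) : finrank R ↥(s ⊔ t) = finrank R s + finrank R t := by
  have := rank_sup_add_rank_inf_eq s t
  rw [h.eq_bot, rank_bot, add_zero, ← finrank_eq_rank, ← finrank_eq_rank, ← finrank_eq_rank] at this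
  exact_mod_cast this

theorem Submodule.span_coe_sup_of_tower {R S M : Type*} [Semiring R] [Semiring S]
    [AddCommMonoid M] [Module R M] [Module S M] [SMul R S] [IsScalarTower R S M]
    (p q : Submodule R M) :
    span S ((p ⊔ q : Submodule R M) : Set M) = span S (p : Set M) ⊔ span S (q : Set M) := by
  rw [← span_union, ← p.span_eq, ← q.span_eq, ← span_union, span_span_of_tower, span_eq, span_eq]

section Discrete

variable {E : Type*} [NormedAddCommGroup E] [NormedSpace ℝ E] [FiniteDimensional ℝ E]

theorem finrank_int_eq_finrank_span_real (L : Submodule ℤ E) [DiscreteTopology L] :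
    finrank ℤ L = finrank ℝ (span ℝ (L : Set E)) := by
  have := Real.finrank_eq_int_finrank_of_discrete (s := (L : Set E)) (by rwa [span_eq])
  rw [Set.finrank, Set.finrank, span_eq] at this
  exact this.symm

theorem disjoint_span_real_of_discreteTopology_sup {p q : Submodule ℤ E}
    [DiscreteTopology ↥(p ⊔ q)] (h : Disjoint p q) :
    Disjoint (span ℝ (p : Set E)) (span ℝ (q : Set E)) := by
  have : DiscreteTopology p := .of_subset ‹_› (SetLike.coe_subset_coe.mpr le_sup_left)
  have : DiscreteTopology q := .of_subset ‹_› (SetLike.coe_subset_coe.mpr le_sup_right)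
  have hdim : finrank ℝ ↥(span ℝ (p : Set E) ⊔ span ℝ (q : Set E))
      = finrank ℝ (span ℝ (p : Set E)) + finrank ℝ (span ℝ (q : Set E)) := by
    rw [← span_coe_sup_of_tower, ← finrank_int_eq_finrank_span_real,
      ← finrank_int_eq_finrank_span_real, ← finrank_int_eq_finrank_span_real,
      finrank_sup_of_disjoint h]
  have := finrank_sup_add_finrank_inf_eq (span ℝ (p : Set E)) (span ℝ (q : Set E))
  rw [disjoint_iff, ← finrank_eq_zero]
  omega

end Discrete

theorem discrete_subgroup_avoids_span_general
    (E : Type*) [NormedAddCommGroup E] [NormedSpace ℝ E] [FiniteDimensional ℝ E]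
    (Γ F : AddSubgroup E)
    (hFΓdisc : DiscreteTopology ↥(F ⊔ Γ))
    (htriv : F ⊓ Γ = ⊥) :
    (∀ x ∈ F, x ∈ Submodule.span ℝ (Γ : Set E) → x = 0) ∧
    ∃ W : Submodule ℝ E, IsCompl (Submodule.span ℝ (Γ : Set E)) W ∧ (F : Set E) ⊆ W := by
  have : DiscreteTopology ↥(F.toIntSubmodule ⊔ Γ.toIntSubmodule) := by
    rwa [← SupHomClass.map_sup]
  have hdisj : Disjoint (span ℝ (F : Set E)) (span ℝ (Γ : Set E)) :=
    disjoint_span_real_of_discreteTopology_sup (p := F.toIntSubmodule) (q := Γ.toIntSubmodule)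
      ((disjoint_iff.mpr htriv).map_orderIso AddSubgroup.toIntSubmodule)
  obtain ⟨W, hFW, hWΓ⟩ := hdisj.exists_isCompl
  exact ⟨fun x hxF hxΓ ↦ disjoint_def.mp hdisj x (subset_span hxF) hxΓ,
    W, hWΓ.symm, subset_span.trans hFW⟩

/-- Let `Ã` be a finite-dimensional real normed space, `Γ` a discrete additive subgroup, and
`F̃` an additive subgroup with `F̃ + Γ` discrete and `F̃ ∩ Γ = {0}`. Then
`F̃ ∩ span_ℝ(Γ) = {0}`, hence `F̃` is contained in a linear complement of `span_ℝ(Γ)`. -/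
theorem discrete_subgroup_avoids_span
    (E : Type*) [NormedAddCommGroup E] [NormedSpace ℝ E] [FiniteDimensional ℝ E]
    (Γ F : AddSubgroup E)
    (hΓ : DiscreteTopology Γ)
    (hFΓdisc : DiscreteTopology ↥(F ⊔ Γ))
    (htriv : F ⊓ Γ = ⊥) :
    (∀ x ∈ F, x ∈ Submodule.span ℝ (Γ : Set E) → x = 0) ∧
    ∃ W : Submodule ℝ E, IsCompl (Submodule.span ℝ (Γ : Set E)) W ∧ (F : Set E) ⊆ W :=
  discrete_subgroup_avoids_span_general E Γ F hFΓdisc htriv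
end

section
/- Let G be the group of invertible upper triangular n×n matrices over ℚ_p and U the subgroup of upper unipotent matrices (triangular with all diagonal entries 1). For A = (a_ij) ∈ U define ‖A‖ = max over all pairs i < j of |a_ij|_p^{1/(j-i)}. Then ‖·‖ is an ultralength on U: ‖1‖ = 0, ‖A⁻¹‖ = ‖A‖, and ‖AB‖ ≤ max(‖A‖, ‖B‖) for all A, B ∈ U. -/
open scoped Matrix

/-- Upper unipotent matrix: upper triangular with all diagonal entries `1`. -/
def IsUpperUnipotent {p : ℕ} [Fact p.Prime] {n : ℕ}
    (M : Matrix (Fin n) (Fin n) ℚ_[p]) : Prop :=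
  (∀ i j : Fin n, (j : ℕ) < (i : ℕ) → M i j = 0) ∧ ∀ i : Fin n, M i i = 1

/-- `‖A‖ = max_{i<j} |a_{ij}|_p^{1/(j-i)}` for an upper unipotent matrix `A`. -/
noncomputable def unorm {p : ℕ} [Fact p.Prime] {n : ℕ}
    (M : Matrix (Fin n) (Fin n) ℚ_[p]) : ℝ :=
  ⨆ q : Fin n × Fin n,
    if (q.1 : ℕ) < (q.2 : ℕ)
    then ‖M q.1 q.2‖ ^ ((((q.2 : ℕ) : ℝ) - ((q.1 : ℕ) : ℝ))⁻¹)
    else 0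

/-!
Bounding `unorm A` by `c` means `‖a_ij‖ ≤ c ^ (j - i)` for `i < j`. For upper triangular
matrices these bounds (extended to `i ≤ j`) are preserved by sums and, thanks to the ultrametric
inequality and `c ^ (k - i) * c ^ (j - k) = c ^ (j - i)`, by products: they cut out a subring.
A unipotent `A` is `1 - N` with `N` nilpotent, so `A⁻¹ = ∑ N ^ k` lies in every subring
containing `A`.
-/

open scoped NNReal
open Finset

namespace Matrix

section Triangular

variable {m R : Type*} [Fintype m]

theorem IsUpperTriangular.mul_apply_self [LinearOrder m] [NonUnitalNonAssocSemiring R]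
    {M N : Matrix m m R} (hM : M.IsUpperTriangular) (hN : N.IsUpperTriangular) (i : m) :
    (M * N) i i = M i i * N i i := by
  rw [mul_apply, sum_eq_single i]
  · intro k _ hk
    rcases hk.lt_or_gt with h | h
    · rw [hM h, zero_mul]
    · rw [hN h, mul_zero]
  · simp

theorem IsUpperTriangular.isNilpotent [DecidableEq m] [LinearOrder m] [CommRing R]
    {N : Matrix m m R} (hN : N.IsUpperTriangular) (hdiag : ∀ i, N i i = 0) : IsNilpotent N :=
  ⟨Fintype.card m, by
    simpa [charpoly_of_isUpperTriangular N hN, hdiag] using aeval_self_charpoly N⟩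

theorem inv_mem_of_isNilpotent_one_sub [DecidableEq m] [CommRing R]
    {S : Subring (Matrix m m R)} {A : Matrix m m R} (hA : A ∈ S) (hN : IsNilpotent (1 - A)) :
    A⁻¹ ∈ S := by
  obtain ⟨k, hk⟩ := hN
  have hinv : A * ∑ i ∈ range k, (1 - A) ^ i = 1 := by
    simpa [hk] using mul_neg_geom_sum (1 - A) k
  rw [inv_eq_right_inv hinv]
  exact sum_mem fun i _ ↦ pow_mem (sub_mem (one_mem S) hA) i

end Triangular

variable (R : Type*) [SeminormedRing R] [NormOneClass R] [IsUltrametricDist R] (n : ℕ)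

def geomBoundedSubring (c : ℝ≥0) : Subring (Matrix (Fin n) (Fin n) R) where
  carrier := {M | M.IsUpperTriangular ∧ ∀ i j : Fin n, i ≤ j → ‖M i j‖₊ ≤ c ^ ((j : ℕ) - i)}
  zero_mem' := ⟨blockTriangular_zero, fun _ _ _ ↦ by simp⟩
  one_mem' := by
    refine ⟨blockTriangular_one, fun i j _ ↦ ?_⟩
    rcases eq_or_ne i j with rfl | hij
    · simp
    · simp [one_apply_ne hij]
  add_mem' := fun {M P} hM hP ↦ ⟨hM.1.add hP.1, fun i j hij ↦
    (IsUltrametricDist.nnnorm_add_le_max _ _).trans (max_le (hM.2 i j hij) (hP.2 i j hij))⟩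
  neg_mem' := fun {M} hM ↦ ⟨hM.1.neg, fun i j hij ↦ by simpa using hM.2 i j hij⟩
  mul_mem' := fun {M P} hM hP ↦ by
    refine ⟨hM.1.mul hP.1, fun i j hij ↦ ?_⟩
    rw [mul_apply]
    refine IsUltrametricDist.nnnorm_sum_le_of_forall_le fun k _ ↦ ?_
    rcases lt_or_ge k i with hki | hik
    · simp [hM.1 hki]
    rcases lt_or_ge j k with hjk | hkj
    · simp [hP.1 hjk]
    calc ‖M i k * P k j‖₊ ≤ ‖M i k‖₊ * ‖P k j‖₊ := nnnorm_mul_le _ _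
      _ ≤ c ^ ((k : ℕ) - i) * c ^ ((j : ℕ) - k) := mul_le_mul' (hM.2 i k hik) (hP.2 k j hkj)
      _ = c ^ ((j : ℕ) - i) := by
        rw [← pow_add]
        congr 1
        have : (i : ℕ) ≤ k := hik
        have : (k : ℕ) ≤ j := hkj
        omega

end Matrix

section Padic

variable {p : ℕ} [Fact p.Prime] {n : ℕ}

theorem unorm_nonneg (M : Matrix (Fin n) (Fin n) ℚ_[p]) : 0 ≤ unorm M :=
  Real.iSup_nonneg fun _ ↦ by split_ifs <;> positivity

theorem unorm_le_iff {M : Matrix (Fin n) (Fin n) ℚ_[p]} {c : ℝ≥0} :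
    unorm M ≤ c ↔ ∀ i j : Fin n, i < j → ‖M i j‖₊ ≤ c ^ ((j : ℕ) - i) := by
  have entry_le_iff (i j : Fin n) :
      (if (i : ℕ) < j then ‖M i j‖ ^ ((((j : ℕ) : ℝ) - ((i : ℕ) : ℝ))⁻¹) else 0) ≤ c ↔
        (i < j → ‖M i j‖₊ ≤ c ^ ((j : ℕ) - i)) := by
    split_ifs with hij
    · have hd : (((j : ℕ) - i : ℕ) : ℝ) = (j : ℕ) - (i : ℕ) := Nat.cast_sub hij.le
      rw [← hd]
      refine (Real.rpow_inv_le_iff_of_pos (norm_nonneg _) c.2 (by simpa using hij)).trans ?_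
      rw [Real.rpow_natCast, ← NNReal.coe_le_coe, coe_nnnorm, NNReal.coe_pow]
      exact ⟨fun h _ ↦ h, fun h ↦ h hij⟩
    · exact ⟨fun _ h ↦ absurd h hij, fun _ ↦ c.2⟩
  refine ⟨fun h i j ↦ (entry_le_iff i j).1 ?_, fun h ↦ Real.iSup_le (fun q ↦ ?_) c.2⟩
  · exact (le_ciSup (Set.finite_range _).bddAbove (i, j)).trans h
  · exact (entry_le_iff q.1 q.2).2 (h q.1 q.2)

theorem unorm_le_of_mem_geomBoundedSubring {M : Matrix (Fin n) (Fin n) ℚ_[p]} {c : ℝ≥0}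
    (hM : M ∈ Matrix.geomBoundedSubring ℚ_[p] n c) : unorm M ≤ c :=
  unorm_le_iff.2 fun i j hij ↦ hM.2 i j hij.le

namespace IsUpperUnipotent

variable {A : Matrix (Fin n) (Fin n) ℚ_[p]} (hA : IsUpperUnipotent A)
include hA

theorem isUpperTriangular : A.IsUpperTriangular := fun i j hij ↦ hA.1 i j hij

theorem mem_geomBoundedSubring {c : ℝ≥0} (h : unorm A ≤ c) :
    A ∈ Matrix.geomBoundedSubring ℚ_[p] n c := by
  refine ⟨hA.isUpperTriangular, fun i j hij ↦ ?_⟩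
  rcases hij.lt_or_eq with hij | rfl
  · exact unorm_le_iff.1 h i j hij
  · simp [hA.2 i]

theorem isNilpotent_one_sub : IsNilpotent (1 - A) :=
  Matrix.IsUpperTriangular.isNilpotent (Matrix.blockTriangular_one.sub hA.isUpperTriangular)
    fun i ↦ by simp [hA.2 i]

theorem inv_mem_geomBoundedSubring {c : ℝ≥0} (h : unorm A ≤ c) :
    A⁻¹ ∈ Matrix.geomBoundedSubring ℚ_[p] n c :=
  Matrix.inv_mem_of_isNilpotent_one_sub (hA.mem_geomBoundedSubring h) hA.isNilpotent_one_sub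

theorem det_eq_one : A.det = 1 := by
  simp [Matrix.det_of_isUpperTriangular hA.isUpperTriangular, hA.2]

theorem inv : IsUpperUnipotent A⁻¹ := by
  have hinv : A⁻¹.IsUpperTriangular :=
    (hA.inv_mem_geomBoundedSubring (c := ⟨unorm A, unorm_nonneg A⟩) le_rfl).1
  refine ⟨fun i j hij ↦ hinv hij, fun i ↦ ?_⟩
  have := hA.isUpperTriangular.mul_apply_self hinv i
  rwa [Matrix.mul_nonsing_inv A (by simp [hA.det_eq_one]), Matrix.one_apply_eq, hA.2 i,
    one_mul, eq_comm] at this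

theorem unorm_inv_le : unorm A⁻¹ ≤ unorm A :=
  unorm_le_of_mem_geomBoundedSubring
    (hA.inv_mem_geomBoundedSubring (c := ⟨unorm A, unorm_nonneg A⟩) le_rfl)

theorem unorm_inv : unorm A⁻¹ = unorm A := by
  refine le_antisymm hA.unorm_inv_le ?_
  simpa [Matrix.nonsing_inv_nonsing_inv A (by simp [hA.det_eq_one])] using hA.inv.unorm_inv_le

end IsUpperUnipotent

theorem unorm_one : unorm (1 : Matrix (Fin n) (Fin n) ℚ_[p]) = 0 :=
  le_antisymm (unorm_le_iff (c := 0).2 fun i j hij ↦ by simp [Matrix.one_apply_ne hij.ne])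
    (unorm_nonneg 1)

theorem unorm_mul_le {A B : Matrix (Fin n) (Fin n) ℚ_[p]} (hA : IsUpperUnipotent A)
    (hB : IsUpperUnipotent B) : unorm (A * B) ≤ max (unorm A) (unorm B) := by
  let c : ℝ≥0 := ⟨max (unorm A) (unorm B), le_max_of_le_left (unorm_nonneg A)⟩
  exact unorm_le_of_mem_geomBoundedSubring <| mul_mem
    (hA.mem_geomBoundedSubring (c := c) (le_max_left _ _))
    (hB.mem_geomBoundedSubring (c := c) (le_max_right _ _))

end Padic

/-- `unorm` is an ultralength on the group `U` of upper unipotent matrices over `ℚ_p`: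
`‖1‖ = 0`, `‖A⁻¹‖ = ‖A‖` and `‖AB‖ ≤ max (‖A‖) (‖B‖)`. -/
theorem unorm_is_ultralength (p : ℕ) [Fact p.Prime] (n : ℕ) :
    unorm (1 : Matrix (Fin n) (Fin n) ℚ_[p]) = 0 ∧
    (∀ A : Matrix (Fin n) (Fin n) ℚ_[p], IsUpperUnipotent A → unorm A⁻¹ = unorm A) ∧
    (∀ A B : Matrix (Fin n) (Fin n) ℚ_[p], IsUpperUnipotent A → IsUpperUnipotent B →
      unorm (A * B) ≤ max (unorm A) (unorm B)) :=
  ⟨unorm_one, fun _ hA ↦ hA.unorm_inv, fun _ _ hA hB ↦ unorm_mul_le hA hB⟩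
end

section
/- Let G be a group with a subadditive length function |·| (|1| = 0, |g⁻¹| = |g|, |gh| ≤ |g| + |h|), let N be a normal subgroup and π : G → G/N the quotient map, with G/N given the quotient length |π(g)|' = inf{|gn| : n ∈ N}. Suppose there are constants a ≥ 1, b ≥ 0 such that every element h ∈ N satisfies |h| ≤ a·L(h) + b, where L is a subadditive length on N satisfying a quasi-ultrametric inequality with constant C. Fix a nonprincipal ultrafilter ω. Then for sequences in N that are linearly bounded for |·|, the induced distance on Cone(N ⊆ G, ω) (i.e., N with the restricted metric of G) is bilipschitz bounded above by the ultrametric cone distance of (N, L); in particular the fibers of the induced map Cone(G,ω) → Cone(G/N,ω) are bilipschitz to ultrametric spaces with uniform constant. -/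
open Filter

/-- Let `G` be a group with a subadditive length `|·|`, `N ⊴ G`, and `L` a subadditive
quasi-ultrametric (constant `C`) length on `N` with `|h| ≤ a·L(h) + b` on `N`. Then on
linearly bounded sequences in `N`, the cone distance induced from `|·|` is bounded above by
`a` times the cone distance induced from `L`, and the latter is ultrametric; so the fibers of
`Cone(G,ω) → Cone(G/N,ω)` are (uniformly) bilipschitz to ultrametric spaces. -/
theorem cone_fiber_dist_le_ultrametric_cone_dist
    {G : Type*} [Group G]
    (len : G → ℝ)
    (hlen1 : len 1 = 0) (hlen_inv : ∀ g, len g⁻¹ = len g)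
    (hlen_sub : ∀ g h, len (g * h) ≤ len g + len h) (hlen_nonneg : ∀ g, 0 ≤ len g)
    (N : Subgroup G) (hN : N.Normal)
    (L : G → ℝ) (C : ℝ) (hC : 0 ≤ C)
    (hL1 : L 1 = 0) (hL_inv : ∀ h ∈ N, L h⁻¹ = L h) (hL_nonneg : ∀ h ∈ N, 0 ≤ L h)
    (hL_sub : ∀ g ∈ N, ∀ h ∈ N, L (g * h) ≤ L g + L h)
    (hL_qu : ∀ g ∈ N, ∀ h ∈ N, L (g * h) ≤ max (L g) (L h) + C)
    (a b : ℝ) (ha : 1 ≤ a) (hb : 0 ≤ b)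
    (hcomp : ∀ h ∈ N, len h ≤ a * L h + b)
    (ω : Ultrafilter ℕ) (hω : (Filter.cofinite : Filter ℕ) ≤ ↑ω)
    (u v w : ℕ → G)
    (hu : ∀ n, u n ∈ N) (hv : ∀ n, v n ∈ N) (hw : ∀ n, w n ∈ N)
    (hu_bd : ∃ K : ℝ, ∀ n : ℕ, len (u n) ≤ K * (n + 1))
    (hv_bd : ∃ K : ℝ, ∀ n : ℕ, len (v n) ≤ K * (n + 1))
    (hw_bd : ∃ K : ℝ, ∀ n : ℕ, len (w n) ≤ K * (n + 1)) :
    -- the `|·|`-cone distance is at most `a` times the `L`-cone distance: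
    (∀ D D' : ℝ,
      Tendsto (fun n : ℕ => len ((u n)⁻¹ * v n) / n) ω (nhds D) →
      Tendsto (fun n : ℕ => L ((u n)⁻¹ * v n) / n) ω (nhds D') →
      D ≤ a * D') ∧
    -- the `L`-cone distance is ultrametric:
    (∀ Duv Dvw Duw : ℝ,
      Tendsto (fun n : ℕ => L ((u n)⁻¹ * v n) / n) ω (nhds Duv) →
      Tendsto (fun n : ℕ => L ((v n)⁻¹ * w n) / n) ω (nhds Dvw) →
      Tendsto (fun n : ℕ => L ((u n)⁻¹ * w n) / n) ω (nhds Duw) →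
      Duw ≤ max Duv Dvw) := by
  -- From `cofinite ≤ ω` and `ω` ultrafilter, deduce `ω ≤ cofinite` (nonprincipality).
  have hω' : (↑ω : Filter ℕ) ≤ (Filter.cofinite : Filter ℕ) := by
    intro s hs
    by_contra hsn
    have hcm : sᶜ ∈ (↑ω : Filter ℕ) := Ultrafilter.compl_mem_iff_notMem.mpr hsn
    have h2 : sᶜ ∈ (Filter.cofinite : Filter ℕ) := hω hcm
    rw [Filter.mem_cofinite, compl_compl] at h2
    rw [Filter.mem_cofinite] at hs
    have : (Set.univ : Set ℕ).Finite := by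
      simpa [Set.union_compl_self] using h2.union hs
    exact Set.infinite_univ this
  have hωtop : (↑ω : Filter ℕ) ≤ atTop := by
    rw [← Nat.cofinite_eq_atTop]; exact hω'
  have hnat : Tendsto (fun n : ℕ => (n : ℝ)) (↑ω : Filter ℕ) atTop :=
    tendsto_natCast_atTop_atTop.mono_left hωtop
  have hb0 : Tendsto (fun n : ℕ => b / (n : ℝ)) (↑ω : Filter ℕ) (nhds 0) :=
    Tendsto.div_atTop tendsto_const_nhds hnat
  have hC0 : Tendsto (fun n : ℕ => C / (n : ℝ)) (↑ω : Filter ℕ) (nhds 0) :=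
    Tendsto.div_atTop tendsto_const_nhds hnat
  constructor
  · intro D D' hD hD'
    have hRHS : Tendsto (fun n : ℕ => a * (L ((u n)⁻¹ * v n) / n) + b / n)
        (↑ω : Filter ℕ) (nhds (a * D' + 0)) := (hD'.const_mul a).add hb0
    have hle : ∀ n : ℕ, len ((u n)⁻¹ * v n) / (n : ℝ) ≤
        a * (L ((u n)⁻¹ * v n) / n) + b / n := by
      intro n
      have hx : (u n)⁻¹ * v n ∈ N := mul_mem (inv_mem (hu n)) (hv n)
      have h1 : len ((u n)⁻¹ * v n) ≤ a * L ((u n)⁻¹ * v n) + b := hcomp _ hx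
      calc len ((u n)⁻¹ * v n) / (n : ℝ)
          ≤ (a * L ((u n)⁻¹ * v n) + b) / n := by
            rw [div_eq_mul_inv, div_eq_mul_inv]
            exact mul_le_mul_of_nonneg_right h1 (by positivity)
        _ = a * (L ((u n)⁻¹ * v n) / n) + b / n := by ring
    have := le_of_tendsto_of_tendsto' hD hRHS hle
    linarith
  · intro Duv Dvw Duw h1 h2 h3
    have hRHS : Tendsto
        (fun n : ℕ => max (L ((u n)⁻¹ * v n) / n) (L ((v n)⁻¹ * w n) / n) + C / n)
        (↑ω : Filter ℕ) (nhds (max Duv Dvw + 0)) := (h1.max h2).add hC0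
    have hev : ∀ᶠ n : ℕ in (↑ω : Filter ℕ),
        L ((u n)⁻¹ * w n) / (n : ℝ) ≤
          max (L ((u n)⁻¹ * v n) / n) (L ((v n)⁻¹ * w n) / n) + C / n := by
      have h1n : ∀ᶠ n : ℕ in (↑ω : Filter ℕ), 1 ≤ n :=
        (eventually_ge_atTop 1).filter_mono hωtop
      filter_upwards [h1n] with n hn
      have hnpos : (0 : ℝ) < n := by exact_mod_cast hn
      have huv : (u n)⁻¹ * v n ∈ N := mul_mem (inv_mem (hu n)) (hv n)
      have hvw : (v n)⁻¹ * w n ∈ N := mul_mem (inv_mem (hv n)) (hw n)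
      have key : L ((u n)⁻¹ * w n) ≤
          max (L ((u n)⁻¹ * v n)) (L ((v n)⁻¹ * w n)) + C := by
        have := hL_qu _ huv _ hvw
        simpa [mul_assoc] using this
      calc L ((u n)⁻¹ * w n) / (n : ℝ)
          ≤ (max (L ((u n)⁻¹ * v n)) (L ((v n)⁻¹ * w n)) + C) / n := by
            rw [div_eq_mul_inv, div_eq_mul_inv]
            exact mul_le_mul_of_nonneg_right key (by positivity)
        _ = max (L ((u n)⁻¹ * v n) / n) (L ((v n)⁻¹ * w n) / n) + C / n := by
            rw [add_div, max_div_div_right hnpos.le]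
    have := le_of_tendsto_of_tendsto h3 hRHS hev
    linarith
end

section
/- Let X, Y be metric spaces, f : X → Y a surjective map with metrically parallel fibers that is 1-Lipschitz (d(f(x),f(x')) ≤ d(x,x')). Then for any nonprincipal ultrafilter ω, f induces a well-defined 1-Lipschitz surjective map F : Cone(X,ω) → Cone(Y,ω) which again has metrically parallel fibers. -/
/-!
Composition with a `K`-Lipschitz map `f` sends linearly bounded sequences to linearly bounded
sequences and shrinks every scaled distance `d(u n, v n) / n` by at most `K`, so it descends to a
`K`-Lipschitz map of asymptotic cones. Parallel fibers are transported termwise: for sequences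
`u`, `v` choose `w n` in the fiber of `v n` with `d(u n, w n) = d(f (u n), f (w n))`; then the
scaled distances of `u, w` and of their images agree for every `n`, hence so do their ultralimits.
Taking `u` constant at the basepoint gives lifts of linearly bounded sequences of `Y`, which is
surjectivity.
-/

open Filter

/-- The asymptotic precone of `X` (with basepoint `x₀`): linearly bounded sequences in `X`.
The ultrafilter `ω` is a parameter fixing the ultralimit semi-distance. -/
def Precone (X : Type*) [MetricSpace X] (ω : Ultrafilter ℕ) (x₀ : X) : Type _ :=
  {u : ℕ → X // ∃ C : ℝ, ∀ n : ℕ, dist (u n) x₀ ≤ C * (n + 1)}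

namespace Precone

variable {X : Type*} [MetricSpace X] {ω : Ultrafilter ℕ} {x₀ : X}

/-- The ultralimit semi-distance `lim_ω d(u_n, v_n)/n`. -/
noncomputable def preDist (ω : Ultrafilter ℕ) (u v : ℕ → X) : ℝ :=
  limUnder (ω : Filter ℕ) (fun n : ℕ => dist (u n) (v n) / n)

theorem bounded (u v : Precone X ω x₀) :
    ∃ K : ℝ, ∀ n : ℕ, (fun n : ℕ => dist (u.1 n) (v.1 n) / n) n ∈ Set.Icc (0 : ℝ) K := by
  obtain ⟨Cu, hu⟩ := u.2
  obtain ⟨Cv, hv⟩ := v.2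
  refine ⟨2 * (Cu + Cv), fun n => ⟨by positivity, ?_⟩⟩
  have hCu : 0 ≤ Cu := by have := hu 0; have := dist_nonneg (x := u.1 0) (y := x₀); nlinarith
  have hCv : 0 ≤ Cv := by have := hv 0; have := dist_nonneg (x := v.1 0) (y := x₀); nlinarith
  rcases Nat.eq_zero_or_pos n with h | h
  · simp [h]; positivity
  · have hn : (0 : ℝ) < n := by exact_mod_cast h
    have h1 : dist (u.1 n) (v.1 n) ≤ (Cu + Cv) * (n + 1) := by
      calc dist (u.1 n) (v.1 n) ≤ dist (u.1 n) x₀ + dist (v.1 n) x₀ := dist_triangle_right _ _ _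
        _ ≤ Cu * (n + 1) + Cv * (n + 1) := add_le_add (hu n) (hv n)
        _ = (Cu + Cv) * (n + 1) := by ring
    rw [div_le_iff₀ hn]
    have h1n : (1 : ℝ) ≤ n := by exact_mod_cast h
    have h2 : ((n : ℝ) + 1) ≤ 2 * n := by nlinarith
    calc dist (u.1 n) (v.1 n) ≤ (Cu + Cv) * (n + 1) := h1
      _ ≤ (Cu + Cv) * (2 * n) := by nlinarith
      _ = 2 * (Cu + Cv) * n := by ring

theorem tendsto_preDist (u v : Precone X ω x₀) :
    Tendsto (fun n : ℕ => dist (u.1 n) (v.1 n) / n) ω (nhds (preDist ω u.1 v.1)) := by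
  obtain ⟨K, hK⟩ := bounded u v
  have hmem : (Ultrafilter.map (fun n : ℕ => dist (u.1 n) (v.1 n) / n) ω : Filter ℝ)
      ≤ Filter.principal (Set.Icc (0 : ℝ) K) := by
    rw [Ultrafilter.coe_map]
    refine le_principal_iff.mpr ?_
    exact Filter.mem_map.mpr (Filter.univ_mem' fun n => hK n)
  obtain ⟨a, -, ha⟩ := (isCompact_Icc (a := (0:ℝ)) (b := K)).ultrafilter_le_nhds
    (Ultrafilter.map (fun n : ℕ => dist (u.1 n) (v.1 n) / n) ω) hmem
  exact tendsto_nhds_limUnder ⟨a, ha⟩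

noncomputable instance : PseudoMetricSpace (Precone X ω x₀) where
  dist u v := preDist ω u.1 v.1
  dist_self u := by
    have h0 : Tendsto (fun n : ℕ => dist (u.1 n) (u.1 n) / n) ω (nhds 0) := by
      simpa using (tendsto_const_nhds : Tendsto (fun _ : ℕ => (0:ℝ)) ω (nhds 0))
    exact tendsto_nhds_unique (tendsto_preDist u u) h0
  dist_comm u v := by
    simp only [preDist, dist_comm]
  dist_triangle u v w := by
    refine le_of_tendsto_of_tendsto' (tendsto_preDist u w)
      ((tendsto_preDist u v).add (tendsto_preDist v w)) (fun n => ?_)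
    rcases Nat.eq_zero_or_pos n with h | h
    · simp [h]
    · have hn : (0 : ℝ) < n := by exact_mod_cast h
      rw [← add_div]
      exact div_le_div_of_nonneg_right (dist_triangle _ _ _) hn.le

end Precone

/-- The asymptotic cone of `X` with respect to `ω` and basepoint `x₀`: the metric quotient of
the precone by the vanishing of the ultralimit semi-distance. -/
def Cone (X : Type*) [MetricSpace X] (ω : Ultrafilter ℕ) (x₀ : X) : Type _ :=
  SeparationQuotient (Precone X ω x₀)

noncomputable instance (X : Type*) [MetricSpace X] (ω : Ultrafilter ℕ) (x₀ : X) :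
    MetricSpace (Cone X ω x₀) :=
  inferInstanceAs (MetricSpace (SeparationQuotient (Precone X ω x₀)))

/-- The class in the asymptotic cone of a linearly bounded sequence. -/
noncomputable def Cone.mk {X : Type*} [MetricSpace X] {ω : Ultrafilter ℕ} {x₀ : X}
    (u : Precone X ω x₀) : Cone X ω x₀ :=
  SeparationQuotient.mk u

def HasParallelFibers {X Y : Type*} [MetricSpace X] [MetricSpace Y] (f : X → Y) : Prop :=
  ∀ x y : X, ∃ z : X, f z = f y ∧ dist x z = dist (f x) (f z)

theorem HasParallelFibers.exists_mem_fiber_dist_eq {X Y : Type*} [MetricSpace X] [MetricSpace Y]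
    {f : X → Y} (hpar : HasParallelFibers f) (hsurj : Function.Surjective f) (x : X) (y : Y) :
    ∃ z : X, f z = y ∧ dist x z = dist (f x) y := by
  obtain ⟨w, rfl⟩ := hsurj y
  obtain ⟨z, hz, hdist⟩ := hpar x w
  exact ⟨z, hz, hz ▸ hdist⟩

namespace Precone

variable {X Y : Type*} [MetricSpace X] [MetricSpace Y] {ω : Ultrafilter ℕ} {x₀ : X} {y₀ : Y}

theorem dist_def (u v : Precone X ω x₀) : dist u v = preDist ω u.1 v.1 := rfl

theorem exists_dist_le (u v : Precone X ω x₀) :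
    ∃ C : ℝ, ∀ n : ℕ, dist (u.1 n) (v.1 n) ≤ C * (n + 1) := by
  obtain ⟨Cu, hu⟩ := u.2
  obtain ⟨Cv, hv⟩ := v.2
  exact ⟨Cu + Cv, fun n => (dist_triangle_right _ _ x₀).trans (by linarith [hu n, hv n])⟩

theorem dist_le_mul_of_forall_dist_le {u v : Precone X ω x₀} {u' v' : Precone Y ω y₀}
    {K : ℝ} (h : ∀ n, dist (u.1 n) (v.1 n) ≤ K * dist (u'.1 n) (v'.1 n)) :
    dist u v ≤ K * dist u' v' :=
  le_of_tendsto_of_tendsto' (tendsto_preDist u v) ((tendsto_preDist u' v').const_mul K)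
    fun n => (mul_div_assoc K _ _).symm ▸ div_le_div_of_nonneg_right (h n) n.cast_nonneg

theorem dist_eq_of_forall_dist_eq {u v : Precone X ω x₀} {u' v' : Precone Y ω y₀}
    (h : ∀ n, dist (u.1 n) (v.1 n) = dist (u'.1 n) (v'.1 n)) : dist u v = dist u' v' := by
  simp only [dist_def, preDist, h]

variable {K : NNReal} {f : X → Y}

def map (hf : LipschitzWith K f) (u : Precone X ω x₀) : Precone Y ω (f x₀) :=
  ⟨f ∘ u.1, by
    obtain ⟨C, hC⟩ := u.2
    refine ⟨K * C, fun n => (hf.dist_le_mul _ _).trans ?_⟩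
    rw [mul_assoc]
    exact mul_le_mul_of_nonneg_left (hC n) K.2⟩

theorem lipschitzWith_map (hf : LipschitzWith K f) :
    LipschitzWith K (map hf : Precone X ω x₀ → Precone Y ω (f x₀)) :=
  LipschitzWith.of_dist_le_mul fun _ _ => dist_le_mul_of_forall_dist_le fun _ => hf.dist_le_mul _ _

theorem map_surjective (hf : LipschitzWith K f) (hsurj : Function.Surjective f)
    (hpar : HasParallelFibers f) :
    Function.Surjective (map hf : Precone X ω x₀ → Precone Y ω (f x₀)) := by
  intro v
  choose z hz hdist using fun n => hpar.exists_mem_fiber_dist_eq hsurj x₀ (v.1 n)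
  obtain ⟨C, hC⟩ := v.2
  refine ⟨⟨z, C, fun n => ?_⟩, Subtype.ext (funext hz)⟩
  rw [dist_comm, hdist, dist_comm]
  exact hC n

theorem exists_map_eq_dist_eq (hf : LipschitzWith K f) (hpar : HasParallelFibers f)
    (u v : Precone X ω x₀) :
    ∃ w : Precone X ω x₀, map hf w = map hf v ∧ dist u w = dist (map hf u) (map hf w) := by
  choose w hw hdist using fun n => hpar (u.1 n) (v.1 n)
  have hw_bdd : ∃ C : ℝ, ∀ n : ℕ, dist (w n) x₀ ≤ C * (n + 1) := by
    obtain ⟨Cu, hu⟩ := u.2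
    obtain ⟨C, hC⟩ := exists_dist_le u v
    refine ⟨K * C + Cu, fun n => ?_⟩
    calc dist (w n) x₀ ≤ dist (u.1 n) (w n) + dist (u.1 n) x₀ := dist_triangle_left _ _ _
      _ = dist (f (u.1 n)) (f (v.1 n)) + dist (u.1 n) x₀ := by rw [hdist, hw]
      _ ≤ K * (C * (n + 1)) + Cu * (n + 1) :=
          add_le_add ((hf.dist_le_mul _ _).trans (mul_le_mul_of_nonneg_left (hC n) K.2)) (hu n)
      _ = (K * C + Cu) * (n + 1) := by ring
  exact ⟨⟨w, hw_bdd⟩, Subtype.ext (funext hw), dist_eq_of_forall_dist_eq hdist⟩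

end Precone

namespace Cone

variable {X Y : Type*} [MetricSpace X] [MetricSpace Y] {ω : Ultrafilter ℕ} {x₀ : X}
  {K : NNReal} {f : X → Y}

theorem surjective_mk : Function.Surjective (Cone.mk : Precone X ω x₀ → Cone X ω x₀) :=
  SeparationQuotient.surjective_mk

theorem dist_mk (u v : Precone X ω x₀) : dist (Cone.mk u) (Cone.mk v) = dist u v :=
  SeparationQuotient.dist_mk u v

noncomputable def map (hf : LipschitzWith K f) : Cone X ω x₀ → Cone Y ω (f x₀) :=
  SeparationQuotient.map (Precone.map hf)

theorem map_mk (hf : LipschitzWith K f) (u : Precone X ω x₀) :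
    map hf (Cone.mk u) = Cone.mk (Precone.map hf u) :=
  SeparationQuotient.map_mk (Precone.lipschitzWith_map hf).uniformContinuous u

theorem lipschitzWith_map (hf : LipschitzWith K f) :
    LipschitzWith K (map hf : Cone X ω x₀ → Cone Y ω (f x₀)) := by
  refine LipschitzWith.of_dist_le_mul fun a b => ?_
  obtain ⟨u, rfl⟩ := surjective_mk a
  obtain ⟨v, rfl⟩ := surjective_mk b
  rw [map_mk, map_mk, dist_mk, dist_mk]
  exact (Precone.lipschitzWith_map hf).dist_le_mul u v

theorem map_surjective (hf : LipschitzWith K f) (hsurj : Function.Surjective f)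
    (hpar : HasParallelFibers f) :
    Function.Surjective (map hf : Cone X ω x₀ → Cone Y ω (f x₀)) := by
  intro b
  obtain ⟨v, rfl⟩ := surjective_mk b
  obtain ⟨u, rfl⟩ := Precone.map_surjective hf hsurj hpar v
  exact ⟨Cone.mk u, map_mk hf u⟩

theorem hasParallelFibers_map (hf : LipschitzWith K f) (hpar : HasParallelFibers f) :
    HasParallelFibers (map hf : Cone X ω x₀ → Cone Y ω (f x₀)) := by
  intro a b
  obtain ⟨u, rfl⟩ := surjective_mk a
  obtain ⟨v, rfl⟩ := surjective_mk b
  obtain ⟨w, hw, hdist⟩ := Precone.exists_map_eq_dist_eq hf hpar u v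
  refine ⟨Cone.mk w, ?_, ?_⟩
  · rw [map_mk, map_mk, hw]
  · rw [map_mk, map_mk, dist_mk, dist_mk, hdist]

end Cone

theorem cone_map_of_parallel_fibers_general
    (X Y : Type*) [MetricSpace X] [MetricSpace Y]
    (f : X → Y) (hsurj : Function.Surjective f)
    (hlip : ∀ x x' : X, dist (f x) (f x') ≤ dist x x')
    (hpar : ∀ x y : X, ∃ z : X, f z = f y ∧ dist x z = dist (f x) (f z))
    (x₀ : X) (ω : Ultrafilter ℕ) :
    ∃ F : Cone X ω x₀ → Cone Y ω (f x₀),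
      (∀ (u : Precone X ω x₀) (v : Precone Y ω (f x₀)),
        (∀ n : ℕ, v.1 n = f (u.1 n)) → F (Cone.mk u) = Cone.mk v) ∧
      (∀ a b : Cone X ω x₀, dist (F a) (F b) ≤ dist a b) ∧
      Function.Surjective F ∧
      (∀ a b : Cone X ω x₀, ∃ c : Cone X ω x₀,
        F c = F b ∧ dist a c = dist (F a) (F c)) := by
  have hf : LipschitzWith 1 f := LipschitzWith.of_dist_le_mul fun x x' => by simpa using hlip x x'
  refine ⟨Cone.map hf, fun u v hv => ?_, fun a b => ?_, Cone.map_surjective hf hsurj hpar,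
    Cone.hasParallelFibers_map hf hpar⟩
  · rw [Cone.map_mk]
    exact congrArg Cone.mk (Subtype.ext (funext fun n => (hv n).symm))
  · simpa using (Cone.lipschitzWith_map hf).dist_le_mul a b

/-- A surjective `1`-Lipschitz map `f : X → Y` with metrically parallel fibers induces a
well-defined surjective `1`-Lipschitz map `Cone(X,ω) → Cone(Y,ω)` which again has metrically
parallel fibers. -/
theorem cone_map_of_parallel_fibers
    (X Y : Type*) [MetricSpace X] [MetricSpace Y]
    (f : X → Y) (hsurj : Function.Surjective f)
    (hlip : ∀ x x' : X, dist (f x) (f x') ≤ dist x x')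
    (hpar : ∀ x y : X, ∃ z : X, f z = f y ∧ dist x z = dist (f x) (f z))
    (x₀ : X) (ω : Ultrafilter ℕ) (hω : (Filter.cofinite : Filter ℕ) ≤ ↑ω) :
    ∃ F : Cone X ω x₀ → Cone Y ω (f x₀),
      (∀ (u : Precone X ω x₀) (v : Precone Y ω (f x₀)),
        (∀ n : ℕ, v.1 n = f (u.1 n)) → F (Cone.mk u) = Cone.mk v) ∧
      (∀ a b : Cone X ω x₀, dist (F a) (F b) ≤ dist a b) ∧
      Function.Surjective F ∧
      (∀ a b : Cone X ω x₀, ∃ c : Cone X ω x₀,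
        F c = F b ∧ dist a c = dist (F a) (F c)) :=
  cone_map_of_parallel_fibers_general X Y f hsurj hlip hpar x₀ ω
end
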